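/- Fix a ∈ 𝒜 with P(Y⁰=0, A=a) > 0, and assume consistency (P-almost surely, if D = 0 then Y = Y⁰), ignorability (for all a' ∈ 𝒜, x ∈ 𝒳, and s, y, d ∈ {0,1} with P(A=a', X=x, S=s) > 0, P(Y⁰=y, D=d | A=a', X=x, S=s) = P(Y⁰=y | A=a', X=x, S=s) · P(D=d | A=a', X=x, S=s)), and positivity (P(D=0, A=a', X=x, S=s) > 0 whenever P(A=a', X=x, S=s) > 0). Then the group-specific counterfactual false positive rate is identified by the group-restricted inverse-probability-weighted ratio: P(S=1 | Y⁰=0, A=a) = E[ 1{D=0} · 1{S=1} · 1{Y=0} · 1{A=a} / (1 − π(A,X,S)) ] / E[ 1{D=0} · 1{Y=0} · 1{A=a} / (1 − π(A,X,S)) ], where the denominator is strictly positive since it equals P(Y⁰=0, A=a). -/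
import Mathlib
open MeasureTheory

noncomputable def pr {Ω : Type*} [MeasurableSpace Ω] (P : Measure Ω) (E : Set Ω) : ℝ :=
  (P E).toReal

noncomputable def cpr {Ω : Type*} [MeasurableSpace Ω] (P : Measure Ω) (E F : Set Ω) : ℝ :=
  pr P (E ∩ F) / pr P F

lemma pr_nonneg {Ω : Type*} [MeasurableSpace Ω] (P : Measure Ω) (E : Set Ω) : 0 ≤ pr P E :=
  ENNReal.toReal_nonneg

lemma pr_mono {Ω : Type*} [MeasurableSpace Ω] (P : Measure Ω) [IsFiniteMeasure P]
    {E F : Set Ω} (h : E ⊆ F) : pr P E ≤ pr P F :=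
  ENNReal.toReal_mono (measure_ne_top P F) (measure_mono h)

lemma pr_fiber_sum {Ω ι : Type*} [MeasurableSpace Ω] [Countable ι]
    [MeasurableSpace ι] [MeasurableSingletonClass ι]
    (P : Measure Ω) [IsFiniteMeasure P] {g : Ω → ι} (hg : Measurable g)
    {F : Set Ω} (hF : MeasurableSet F) :
    ∑' i, pr P (F ∩ g ⁻¹' {i}) = pr P F := by
  have hdisj : Pairwise (Function.onFun Disjoint fun i => F ∩ g ⁻¹' {i}) := by
    intro i j hij
    simp only [Function.onFun, Set.disjoint_left]
    rintro ω ⟨-, h1⟩ ⟨-, h2⟩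
    exact hij (h1.symm.trans h2)
  have hmeas : ∀ i, MeasurableSet (F ∩ g ⁻¹' {i}) :=
    fun i => hF.inter (hg (measurableSet_singleton i))
  have hU : ⋃ i, F ∩ g ⁻¹' {i} = F := by ext ω; simp
  have h := measure_iUnion (μ := P) hdisj hmeas
  rw [hU] at h
  unfold pr
  rw [h, ENNReal.tsum_toReal_eq (fun i => measure_ne_top P _)]

/-- under consistency, ignorability, and positivity, the group-specific
counterfactual false positive rate is identified by the group-restricted
inverse-probability-weighted ratio:
`P(S=1 | Y⁰=0, A=a) = E[1{D=0}·1{S=1}·1{Y=0}·1{A=a}/(1−π(A,X,S))] /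
  E[1{D=0}·1{Y=0}·1{A=a}/(1−π(A,X,S))]`,
where `π(a,x,s) = P(D=1 | A=a, X=x, S=s)`, the expectations are series over the level sets
`(x, s)` of `(X, S)` with `A = a` fixed (the indicator `1{S=1}` is encoded by also requiring
`S ω = true` in the event), and the denominator is strictly positive since it equals
`P(Y⁰=0, A=a)`. Binary variables are modelled as `Bool`-valued, with `1 = true`, `0 = false`. -/
theorem stmt_14
    {Ω 𝒜 𝒳 : Type*} [MeasurableSpace Ω]
    [MeasurableSpace 𝒜] [MeasurableSingletonClass 𝒜] [Countable 𝒜] [Nonempty 𝒜]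
    [MeasurableSpace 𝒳] [MeasurableSingletonClass 𝒳] [Countable 𝒳] [Nonempty 𝒳]
    (P : Measure Ω) [IsProbabilityMeasure P]
    (Y0 Y D S : Ω → Bool) (A : Ω → 𝒜) (X : Ω → 𝒳)
    (hY0 : Measurable Y0) (hY : Measurable Y) (hD : Measurable D) (hS : Measurable S)
    (hA : Measurable A) (hX : Measurable X)
    (a : 𝒜)
    (hpos : 0 < pr P {ω | Y0 ω = false ∧ A ω = a})
    (hcons : ∀ᵐ ω ∂P, D ω = false → Y ω = Y0 ω)
    (hig : ∀ (a' : 𝒜) (x : 𝒳) (s y d : Bool),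
      0 < pr P {ω | A ω = a' ∧ X ω = x ∧ S ω = s} →
      cpr P {ω | Y0 ω = y ∧ D ω = d} {ω | A ω = a' ∧ X ω = x ∧ S ω = s} =
        cpr P {ω | Y0 ω = y} {ω | A ω = a' ∧ X ω = x ∧ S ω = s} *
          cpr P {ω | D ω = d} {ω | A ω = a' ∧ X ω = x ∧ S ω = s})
    (hposD : ∀ (a' : 𝒜) (x : 𝒳) (s : Bool),
      0 < pr P {ω | A ω = a' ∧ X ω = x ∧ S ω = s} →
      0 < pr P {ω | D ω = false ∧ A ω = a' ∧ X ω = x ∧ S ω = s}) :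
    0 < (∑' (x : 𝒳) (s : Bool),
          pr P {ω | D ω = false ∧ Y ω = false ∧ A ω = a ∧ X ω = x ∧ S ω = s} /
            (1 - cpr P {ω | D ω = true} {ω | A ω = a ∧ X ω = x ∧ S ω = s})) ∧
    (∑' (x : 𝒳) (s : Bool),
        pr P {ω | D ω = false ∧ Y ω = false ∧ A ω = a ∧ X ω = x ∧ S ω = s} /
          (1 - cpr P {ω | D ω = true} {ω | A ω = a ∧ X ω = x ∧ S ω = s})) =
      pr P {ω | Y0 ω = false ∧ A ω = a} ∧
    cpr P {ω | S ω = true} {ω | Y0 ω = false ∧ A ω = a} =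
      (∑' (x : 𝒳) (s : Bool),
          pr P {ω | D ω = false ∧ S ω = true ∧ Y ω = false ∧ A ω = a ∧ X ω = x ∧ S ω = s} /
            (1 - cpr P {ω | D ω = true} {ω | A ω = a ∧ X ω = x ∧ S ω = s})) /
        (∑' (x : 𝒳) (s : Bool),
            pr P {ω | D ω = false ∧ Y ω = false ∧ A ω = a ∧ X ω = x ∧ S ω = s} /
              (1 - cpr P {ω | D ω = true} {ω | A ω = a ∧ X ω = x ∧ S ω = s})) := by
  classical
  -- key cell identity
  have key : ∀ (x : 𝒳) (s : Bool),
      pr P {ω | D ω = false ∧ Y ω = false ∧ A ω = a ∧ X ω = x ∧ S ω = s} /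
        (1 - cpr P {ω | D ω = true} {ω | A ω = a ∧ X ω = x ∧ S ω = s}) =
      pr P {ω | Y0 ω = false ∧ A ω = a ∧ X ω = x ∧ S ω = s} := by
    intro x s
    set C : Set Ω := {ω | A ω = a ∧ X ω = x ∧ S ω = s} with hCdef
    have hCm : MeasurableSet C :=
      (hA (measurableSet_singleton a)).inter
        ((hX (measurableSet_singleton x)).inter (hS (measurableSet_singleton s)))
    by_cases hC0 : pr P C = 0
    · have hN0 : pr P {ω | D ω = false ∧ Y ω = false ∧ A ω = a ∧ X ω = x ∧ S ω = s} = 0 :=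
        le_antisymm (hC0 ▸ pr_mono P (fun ω h => h.2.2)) (pr_nonneg P _)
      have hR0 : pr P {ω | Y0 ω = false ∧ A ω = a ∧ X ω = x ∧ S ω = s} = 0 :=
        le_antisymm (hC0 ▸ pr_mono P (fun ω h => h.2)) (pr_nonneg P _)
      rw [hN0, hR0, zero_div]
    · have hC : 0 < pr P C := lt_of_le_of_ne (pr_nonneg P C) (Ne.symm hC0)
      have hsplit : pr P (C ∩ D ⁻¹' {false}) + pr P (C ∩ D ⁻¹' {true}) = pr P C := by
        have h := pr_fiber_sum P hD hCm
        rwa [tsum_bool] at h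
      have hq : (1 : ℝ) - cpr P {ω | D ω = true} C = cpr P {ω | D ω = false} C := by
        have e1 : {ω | D ω = true} ∩ C = C ∩ D ⁻¹' {true} := Set.inter_comm _ _
        have e2 : {ω | D ω = false} ∩ C = C ∩ D ⁻¹' {false} := Set.inter_comm _ _
        unfold cpr
        rw [e1, e2, eq_div_iff hC0, sub_mul, one_mul, div_mul_cancel₀ _ hC0]
        linarith
      have hqpos : 0 < cpr P {ω | D ω = false} C := by
        have h1 := hposD a x s hC
        have e : {ω | D ω = false ∧ A ω = a ∧ X ω = x ∧ S ω = s} = {ω | D ω = false} ∩ C := rfl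
        exact div_pos (e ▸ h1) hC
      have hcons' : pr P {ω | D ω = false ∧ Y ω = false ∧ A ω = a ∧ X ω = x ∧ S ω = s}
          = pr P ({ω | Y0 ω = false ∧ D ω = false} ∩ C) := by
        unfold pr
        congr 1
        apply measure_congr
        rw [Filter.eventuallyEq_set]
        filter_upwards [hcons] with ω hω
        constructor
        · rintro ⟨hd, hy, rest⟩
          exact ⟨⟨(hω hd).symm.trans hy, hd⟩, rest⟩
        · rintro ⟨⟨hy0, hd⟩, rest⟩
          exact ⟨hd, (hω hd).trans hy0, rest⟩
      have hig' := hig a x s false false hC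
      have hmul : pr P ({ω | Y0 ω = false ∧ D ω = false} ∩ C)
          = cpr P {ω | Y0 ω = false ∧ D ω = false} C * pr P C := by
        unfold cpr; field_simp
      have hR : pr P {ω | Y0 ω = false ∧ A ω = a ∧ X ω = x ∧ S ω = s}
          = pr P ({ω | Y0 ω = false} ∩ C) := rfl
      have hmul2 : pr P ({ω | Y0 ω = false} ∩ C)
          = cpr P {ω | Y0 ω = false} C * pr P C := by
        unfold cpr; field_simp
      rw [hq, hcons', hmul, hig', hR, hmul2]
      field_simp
      ring
  -- key cell identity, numerator version
  have key2 : ∀ (x : 𝒳) (s : Bool),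
      pr P {ω | D ω = false ∧ S ω = true ∧ Y ω = false ∧ A ω = a ∧ X ω = x ∧ S ω = s} /
        (1 - cpr P {ω | D ω = true} {ω | A ω = a ∧ X ω = x ∧ S ω = s}) =
      pr P {ω | S ω = true ∧ Y0 ω = false ∧ A ω = a ∧ X ω = x ∧ S ω = s} := by
    intro x s
    cases s with
    | false =>
      have e1 : {ω | D ω = false ∧ S ω = true ∧ Y ω = false ∧ A ω = a ∧ X ω = x ∧ S ω = false}
          = (∅ : Set Ω) := by
        ext ω; simp only [Set.mem_setOf_eq, Set.mem_empty_iff_false, iff_false]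
        rintro ⟨-, h1, -, -, -, h2⟩; simp [h1] at h2
      have e2 : {ω | S ω = true ∧ Y0 ω = false ∧ A ω = a ∧ X ω = x ∧ S ω = false}
          = (∅ : Set Ω) := by
        ext ω; simp only [Set.mem_setOf_eq, Set.mem_empty_iff_false, iff_false]
        rintro ⟨h1, -, -, -, h2⟩; simp [h1] at h2
      rw [e1, e2]
      simp [pr]
    | true =>
      have e1 : {ω | D ω = false ∧ S ω = true ∧ Y ω = false ∧ A ω = a ∧ X ω = x ∧ S ω = true}
          = {ω | D ω = false ∧ Y ω = false ∧ A ω = a ∧ X ω = x ∧ S ω = true} := by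
        ext ω; simp only [Set.mem_setOf_eq]; tauto
      have e2 : {ω | S ω = true ∧ Y0 ω = false ∧ A ω = a ∧ X ω = x ∧ S ω = true}
          = {ω | Y0 ω = false ∧ A ω = a ∧ X ω = x ∧ S ω = true} := by
        ext ω; simp only [Set.mem_setOf_eq]; tauto
      rw [e1, e2]
      exact key x true
  -- double fiber sum
  have sum2 : ∀ (F : Set Ω), MeasurableSet F →
      (∑' (x : 𝒳) (s : Bool), pr P ((F ∩ X ⁻¹' {x}) ∩ S ⁻¹' {s})) = pr P F := by
    intro F hF
    have hinner : ∀ x : 𝒳, (∑' (s : Bool), pr P ((F ∩ X ⁻¹' {x}) ∩ S ⁻¹' {s}))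
        = pr P (F ∩ X ⁻¹' {x}) :=
      fun x => pr_fiber_sum P hS (hF.inter (hX (measurableSet_singleton x)))
    rw [tsum_congr hinner]
    exact pr_fiber_sum P hX hF
  have hFm : MeasurableSet {ω | Y0 ω = false ∧ A ω = a} :=
    (hY0 (measurableSet_singleton false)).inter (hA (measurableSet_singleton a))
  have hFm2 : MeasurableSet {ω | S ω = true ∧ Y0 ω = false ∧ A ω = a} :=
    (hS (measurableSet_singleton true)).inter hFm
  -- denominator identification
  have den : (∑' (x : 𝒳) (s : Bool),
        pr P {ω | D ω = false ∧ Y ω = false ∧ A ω = a ∧ X ω = x ∧ S ω = s} /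
          (1 - cpr P {ω | D ω = true} {ω | A ω = a ∧ X ω = x ∧ S ω = s}))
      = pr P {ω | Y0 ω = false ∧ A ω = a} := by
    have step1 : (∑' (x : 𝒳) (s : Bool),
        pr P {ω | D ω = false ∧ Y ω = false ∧ A ω = a ∧ X ω = x ∧ S ω = s} /
          (1 - cpr P {ω | D ω = true} {ω | A ω = a ∧ X ω = x ∧ S ω = s}))
        = ∑' (x : 𝒳) (s : Bool),
            pr P (({ω | Y0 ω = false ∧ A ω = a} ∩ X ⁻¹' {x}) ∩ S ⁻¹' {s}) := by
      refine tsum_congr fun x => tsum_congr fun s => ?_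
      rw [key x s]
      congr 1
      ext ω
      simp only [Set.mem_setOf_eq, Set.mem_inter_iff, Set.mem_preimage,
        Set.mem_singleton_iff]
      tauto
    rw [step1, sum2 _ hFm]
  have num : (∑' (x : 𝒳) (s : Bool),
        pr P {ω | D ω = false ∧ S ω = true ∧ Y ω = false ∧ A ω = a ∧ X ω = x ∧ S ω = s} /
          (1 - cpr P {ω | D ω = true} {ω | A ω = a ∧ X ω = x ∧ S ω = s}))
      = pr P {ω | S ω = true ∧ Y0 ω = false ∧ A ω = a} := by
    have step1 : (∑' (x : 𝒳) (s : Bool),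
        pr P {ω | D ω = false ∧ S ω = true ∧ Y ω = false ∧ A ω = a ∧ X ω = x ∧ S ω = s} /
          (1 - cpr P {ω | D ω = true} {ω | A ω = a ∧ X ω = x ∧ S ω = s}))
        = ∑' (x : 𝒳) (s : Bool),
            pr P (({ω | S ω = true ∧ Y0 ω = false ∧ A ω = a} ∩ X ⁻¹' {x}) ∩ S ⁻¹' {s}) := by
      refine tsum_congr fun x => tsum_congr fun s => ?_
      rw [key2 x s]
      congr 1
      ext ω
      simp only [Set.mem_setOf_eq, Set.mem_inter_iff, Set.mem_preimage,
        Set.mem_singleton_iff]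
      tauto
    rw [step1, sum2 _ hFm2]
  refine ⟨?_, den, ?_⟩
  · rw [den]; exact hpos
  · rw [num, den]
    unfold cpr
    congr 1
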